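/- arXiv:2503.07092 — 6 statements merged into one kernel-verified Lean document; each statement's English description precedes it below -/
import Mathlib

section
/- Let N ∈ Π_{1,r}, a ∈ ℝ, and λ ∈ ℝ^r. Then λᵀz + a ≥ 0 for all z ∈ Z_r(N) if and only if −λᵀN₂₂⁻¹N₂₁ + a ≥ (N|N₂₂)^(1/2) · ‖(−N₂₂)^(−1/2) λ‖. -/
open Matrix

noncomputable section

private lemma dot_self_nonneg' {r : ℕ} (v : Fin r → ℝ) : 0 ≤ v ⬝ᵥ v :=
  Finset.sum_nonneg fun i _ => mul_self_nonneg _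

private lemma cauchy' {r : ℕ} (v w : Fin r → ℝ) :
    |v ⬝ᵥ w| ≤ Real.sqrt (v ⬝ᵥ v) * Real.sqrt (w ⬝ᵥ w) := by
  rw [← Real.sqrt_mul (dot_self_nonneg' v), ← Real.sqrt_sq_eq_abs]
  apply Real.sqrt_le_sqrt
  have := Finset.sum_mul_sq_le_sq_mul_sq Finset.univ v w
  simpa [dotProduct, pow_two] using this

private lemma ball_iff' {r : ℕ} (s b : ℝ) (hs : 0 ≤ s) (v : Fin r → ℝ) :
    (∀ w : Fin r → ℝ, w ⬝ᵥ w ≤ s → 0 ≤ v ⬝ᵥ w + b) ↔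
      Real.sqrt s * Real.sqrt (v ⬝ᵥ v) ≤ b := by
  constructor
  · intro h
    rcases eq_or_lt_of_le (dot_self_nonneg' v) with h0 | h0
    · have hb := h 0 (by simpa using hs)
      simp only [dotProduct_zero] at hb
      rw [← h0, Real.sqrt_zero, mul_zero]
      linarith
    · set c := Real.sqrt (v ⬝ᵥ v) with hc
      have hcpos : 0 < c := Real.sqrt_pos.2 h0
      have hcsq : c * c = v ⬝ᵥ v := Real.mul_self_sqrt (le_of_lt h0)
      have hssq : Real.sqrt s * Real.sqrt s = s := Real.mul_self_sqrt hs
      have hac : Real.sqrt s / c * c = Real.sqrt s := div_mul_cancel₀ _ hcpos.ne'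
      have hw : ((-(Real.sqrt s / c)) • v) ⬝ᵥ ((-(Real.sqrt s / c)) • v) ≤ s := by
        rw [smul_dotProduct, dotProduct_smul, smul_eq_mul, smul_eq_mul, ← hcsq]
        have : -(Real.sqrt s / c) * (-(Real.sqrt s / c) * (c * c))
            = (Real.sqrt s / c * c) * (Real.sqrt s / c * c) := by ring
        rw [this, hac, hssq]
      have := h _ hw
      rw [dotProduct_smul, smul_eq_mul, ← hcsq] at this
      have hexp : -(Real.sqrt s / c) * (c * c) = -((Real.sqrt s / c * c) * c) := by ring
      rw [hexp, hac] at this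
      linarith
  · intro h w hw
    have h1 := cauchy' v w
    have h2 : Real.sqrt (w ⬝ᵥ w) ≤ Real.sqrt s := Real.sqrt_le_sqrt hw
    have h3 : Real.sqrt (v ⬝ᵥ v) * Real.sqrt (w ⬝ᵥ w) ≤ Real.sqrt s * Real.sqrt (v ⬝ᵥ v) := by
      nlinarith [Real.sqrt_nonneg (v ⬝ᵥ v)]
    have := neg_abs_le (v ⬝ᵥ w)
    linarith

def Zset {r : ℕ} (N11 : ℝ) (N21 : Fin r → ℝ) (N22 : Matrix (Fin r) (Fin r) ℝ) :
    Set (Fin r → ℝ) :=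
  {z | 0 ≤ N11 + 2 * (N21 ⬝ᵥ z) + z ⬝ᵥ N22 *ᵥ z}

/-- The square root of a positive semidefinite matrix, as `Matrix.PosSemidef.sqrt` was
defined in the older Mathlib (that declaration no longer exists). -/
def posSemidefSqrt {n : Type*} [Fintype n] [DecidableEq n] {A : Matrix n n ℝ}
    (hA : A.PosSemidef) : Matrix n n ℝ :=
  hA.1.eigenvectorUnitary.1 * diagonal (Real.sqrt ∘ hA.1.eigenvalues) *
    (star hA.1.eigenvectorUnitary : Matrix n n ℝ)

/-- Let `N ∈ Π_{1,r}` (i.e. `N₂₂ < 0`, Schur complement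
`N|N₂₂ ≥ 0`), `a ∈ ℝ`, `λ ∈ ℝ^r`.  Then `λᵀz + a ≥ 0` for all `z ∈ Z_r(N)` iff
`-λᵀN₂₂⁻¹N₂₁ + a ≥ (N|N₂₂)^(1/2) ⬝ ‖(-N₂₂)^(-1/2) λ‖`, where `‖w‖ = √(wᵀw)` is the
Euclidean norm. -/
theorem nonneg_on_Zset_iff_scalar {r : ℕ} (N11 : ℝ) (N21 : Fin r → ℝ)
    (N22 : Matrix (Fin r) (Fin r) ℝ) (hN22 : (-N22).PosDef)
    (hschur : 0 ≤ N11 - N21 ⬝ᵥ N22⁻¹ *ᵥ N21) (a : ℝ) (l : Fin r → ℝ) :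
    (∀ z ∈ Zset N11 N21 N22, 0 ≤ l ⬝ᵥ z + a) ↔
      Real.sqrt (N11 - N21 ⬝ᵥ N22⁻¹ *ᵥ N21) *
          Real.sqrt (((posSemidefSqrt hN22.posSemidef)⁻¹ *ᵥ l) ⬝ᵥ ((posSemidefSqrt hN22.posSemidef)⁻¹ *ᵥ l))
        ≤ -(l ⬝ᵥ N22⁻¹ *ᵥ N21) + a := by
  classical
  set S := posSemidefSqrt hN22.posSemidef with hSdef
  set s := N11 - N21 ⬝ᵥ N22⁻¹ *ᵥ N21 with hsdef
  have hMdet : IsUnit (-N22).det := hN22.det_pos.ne'.isUnit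
  have hSS : S * S = -N22 := by
    have hP := hN22.posSemidef
    have hU : (star hP.1.eigenvectorUnitary : Matrix (Fin r) (Fin r) ℝ) *
        hP.1.eigenvectorUnitary = 1 := Unitary.coe_star_mul_self _
    conv_rhs => rw [hP.1.spectral_theorem, Unitary.conjStarAlgAut_apply]
    rw [hSdef, posSemidefSqrt]
    rw [show ∀ A B C D E : Matrix (Fin r) (Fin r) ℝ, A * B * C * (A * D * E)
        = A * B * (C * A) * D * E by intros; simp only [Matrix.mul_assoc]]
    rw [hU, Matrix.mul_one, Matrix.mul_assoc _ (diagonal _) (diagonal _), diagonal_mul_diagonal]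
    congr 2
    ext i j
    rw [diagonal_apply, diagonal_apply]
    split_ifs <;> simp [Real.mul_self_sqrt (hP.eigenvalues_nonneg i)]
  have hSsym : Sᵀ = S := by
    rw [← Matrix.conjTranspose_eq_transpose_of_trivial, hSdef, posSemidefSqrt]
    simp [Matrix.conjTranspose_mul, Matrix.mul_assoc, Matrix.diagonal_conjTranspose,
      Matrix.star_eq_conjTranspose, Matrix.conjTranspose_eq_transpose_of_trivial]
  have hSdet : IsUnit S.det := by
    have h1 : S.det * S.det = (-N22).det := by rw [← Matrix.det_mul, hSS]
    exact isUnit_of_mul_isUnit_left (h1 ▸ hMdet)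
  have hN22sym : N22ᵀ = N22 := by
    have h : (-N22)ᵀ = -N22 :=
      (Matrix.conjTranspose_eq_transpose_of_trivial (-N22)).symm.trans hN22.isHermitian
    rw [Matrix.transpose_neg] at h
    exact neg_injective h
  -- inverse relation
  have hN22inv : N22⁻¹ = -(-N22)⁻¹ := by
    apply Matrix.inv_eq_right_inv
    rw [Matrix.mul_neg, ← Matrix.neg_mul, Matrix.mul_nonsing_inv _ hMdet]
  set z0 : Fin r → ℝ := (-N22)⁻¹ *ᵥ N21 with hz0def
  have hz0 : N22 *ᵥ z0 = -N21 := by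
    rw [hz0def, mulVec_mulVec]
    have : N22 * (-N22)⁻¹ = -((-N22) * (-N22)⁻¹) := by rw [Matrix.neg_mul, neg_neg]
    rw [this, Matrix.mul_nonsing_inv _ hMdet]
    simp [Matrix.neg_mulVec]
  have hdotz0 : ∀ x : Fin r → ℝ, x ⬝ᵥ z0 = -(x ⬝ᵥ N22⁻¹ *ᵥ N21) := by
    intro x
    rw [hz0def, hN22inv, Matrix.neg_mulVec, dotProduct_neg, neg_neg]
  -- symmetry transfers
  have hsymdot : ∀ (A : Matrix (Fin r) (Fin r) ℝ), Aᵀ = A →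
      ∀ x y : Fin r → ℝ, x ⬝ᵥ A *ᵥ y = y ⬝ᵥ A *ᵥ x := by
    intro A hA x y
    rw [dotProduct_mulVec, ← Matrix.mulVec_transpose, hA, dotProduct_comm]
  set v : Fin r → ℝ := S⁻¹ *ᵥ l with hvdef
  have hSv : S *ᵥ v = l := by
    rw [hvdef, mulVec_mulVec, Matrix.mul_nonsing_inv _ hSdet, Matrix.one_mulVec]
  -- quadratic identity
  have hQ : ∀ z : Fin r → ℝ, N11 + 2 * (N21 ⬝ᵥ z) + z ⬝ᵥ N22 *ᵥ z
      = s - (S *ᵥ (z - z0)) ⬝ᵥ (S *ᵥ (z - z0)) := by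
    intro z
    have e1 : (S *ᵥ (z - z0)) ⬝ᵥ (S *ᵥ (z - z0)) = -((z - z0) ⬝ᵥ N22 *ᵥ (z - z0)) := by
      rw [dotProduct_mulVec, ← Matrix.mulVec_transpose, hSsym, mulVec_mulVec, hSS,
        Matrix.neg_mulVec, neg_dotProduct, dotProduct_comm]
    have h2 : z ⬝ᵥ N22 *ᵥ z0 = -(N21 ⬝ᵥ z) := by
      rw [hz0, dotProduct_neg, dotProduct_comm]
    have h1 : z0 ⬝ᵥ N22 *ᵥ z = -(N21 ⬝ᵥ z) := by
      rw [hsymdot N22 hN22sym, h2]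
    have h3 : z0 ⬝ᵥ N22 *ᵥ z0 = -(N21 ⬝ᵥ z0) := by
      rw [hz0, dotProduct_neg, dotProduct_comm]
    have h4 : N21 ⬝ᵥ z0 = -(N21 ⬝ᵥ N22⁻¹ *ᵥ N21) := hdotz0 N21
    rw [e1, Matrix.mulVec_sub, dotProduct_sub, sub_dotProduct, sub_dotProduct,
      h1, h2, h3, h4, hsdef]
    ring
  have hmem : ∀ z : Fin r → ℝ, z ∈ Zset N11 N21 N22 ↔
      (S *ᵥ (z - z0)) ⬝ᵥ (S *ᵥ (z - z0)) ≤ s := by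
    intro z
    rw [Zset, Set.mem_setOf_eq, hQ z, sub_nonneg]
  have hlz : ∀ z : Fin r → ℝ, l ⬝ᵥ z = v ⬝ᵥ (S *ᵥ (z - z0)) + l ⬝ᵥ z0 := by
    intro z
    rw [dotProduct_mulVec v S, ← Matrix.mulVec_transpose, hSsym, hSv, dotProduct_sub]
    ring
  have hlz0 : l ⬝ᵥ z0 = -(l ⬝ᵥ N22⁻¹ *ᵥ N21) := hdotz0 l
  rw [← hlz0]
  rw [← ball_iff' s (l ⬝ᵥ z0 + a) hschur v]
  constructor
  · intro h w hw
    have hzw : S *ᵥ ((z0 + S⁻¹ *ᵥ w) - z0) = w := by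
      simp only [add_sub_cancel_left, mulVec_mulVec, Matrix.mul_nonsing_inv _ hSdet,
        Matrix.one_mulVec]
    have hmem' : (z0 + S⁻¹ *ᵥ w) ∈ Zset N11 N21 N22 := by
      rw [hmem, hzw]; exact hw
    have := h _ hmem'
    rw [hlz, hzw] at this
    linarith
  · intro h z hz
    rw [hmem] at hz
    have := h (S *ᵥ (z - z0)) hz
    rw [hlz z]
    linarith
end
end

section
/- (Specialized nonstrict S-lemma.) Let N ∈ Π_{1,r}, a ∈ ℝ, and λ ∈ ℝ^r. Then λᵀz + a ≥ 0 for all z ∈ Z_r(N) if and only if the symmetric (1+r)×(1+r) matrix [[−λᵀN₂₂⁻¹N₂₁ + a, (N|N₂₂)^(1/2) λᵀ],[(N|N₂₂)^(1/2) λ, (λᵀN₂₂⁻¹N₂₁ − a) N₂₂]] is positive semidefinite. -/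
open Matrix

noncomputable section

/-- The symmetric `(1+r) × (1+r)` block matrix `[[c, lᵀ], [l, M]]`. -/
def bmat {r : ℕ} (c : ℝ) (l : Fin r → ℝ) (M : Matrix (Fin r) (Fin r) ℝ) :
    Matrix (Unit ⊕ Fin r) (Unit ⊕ Fin r) ℝ :=
  Matrix.fromBlocks (Matrix.of fun _ _ => c) (Matrix.of fun _ j => l j)
    (Matrix.of fun i _ => l i) M

section Aux

variable {r : ℕ}

lemma symm_dot {A : Matrix (Fin r) (Fin r) ℝ} (hA : A.IsHermitian)
    (u v : Fin r → ℝ) : u ⬝ᵥ (A *ᵥ v) = (A *ᵥ u) ⬝ᵥ v := by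
  rw [dotProduct_mulVec, ← mulVec_transpose, ← conjTranspose_eq_transpose_of_trivial, hA.eq]

lemma psd_dot {A : Matrix (Fin r) (Fin r) ℝ} (hA : A.PosSemidef) (v : Fin r → ℝ) :
    0 ≤ v ⬝ᵥ (A *ᵥ v) := by
  simpa using hA.dotProduct_mulVec_nonneg v

lemma pd_eq_zero {A : Matrix (Fin r) (Fin r) ℝ} (hA : A.PosDef) {v : Fin r → ℝ}
    (h : v ⬝ᵥ (A *ᵥ v) = 0) : v = 0 := by
  by_contra hv
  have := hA.dotProduct_mulVec_pos hv
  simp only [star_trivial] at this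
  linarith

/-- Cauchy–Schwarz for a positive definite form. -/
lemma cs {A : Matrix (Fin r) (Fin r) ℝ} (hA : A.PosDef) (l w : Fin r → ℝ) :
    (l ⬝ᵥ w) ^ 2 ≤ (l ⬝ᵥ (A⁻¹ *ᵥ l)) * (w ⬝ᵥ (A *ᵥ w)) := by
  have hAinv : A⁻¹.PosDef := hA.inv
  have hAA : A * A⁻¹ = 1 := mul_nonsing_inv A hA.det_pos.ne'.isUnit
  set u := A⁻¹ *ᵥ l with hu
  have hAu : A *ᵥ u = l := by rw [hu, mulVec_mulVec, hAA, one_mulVec]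
  set q := l ⬝ᵥ u with hq
  have hq0 : 0 ≤ q := psd_dot hAinv.posSemidef l
  rcases eq_or_lt_of_le hq0 with h0 | h0
  · have : l = 0 := pd_eq_zero hAinv h0.symm
    rw [this, ← h0]
    simp
  · have key : ∀ t : ℝ, 0 ≤ (w ⬝ᵥ (A *ᵥ w)) + 2 * t * (l ⬝ᵥ w) + t ^ 2 * q := by
      intro t
      have h1 := psd_dot hA.posSemidef (w + t • u)
      have e1 : u ⬝ᵥ (A *ᵥ w) = l ⬝ᵥ w := by rw [symm_dot hA.1, hAu]
      have e2 : w ⬝ᵥ (A *ᵥ u) = l ⬝ᵥ w := by rw [hAu, dotProduct_comm]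
      have e3 : u ⬝ᵥ (A *ᵥ u) = q := by rw [hAu, dotProduct_comm, hq]
      simp only [mulVec_add, mulVec_smul, dotProduct_add, add_dotProduct,
        smul_dotProduct, dotProduct_smul, smul_eq_mul, e1, e2, e3] at h1
      nlinarith [h1]
    have h2 := key (-(l ⬝ᵥ w) / q)
    have := psd_dot hA.posSemidef w
    have h3 : q ≠ 0 := ne_of_gt h0
    have h4 : -(l ⬝ᵥ w) / q * q = -(l ⬝ᵥ w) := by field_simp
    nlinarith [h2, h4, sq_nonneg (l ⬝ᵥ w)]

lemma bmat_quad (c : ℝ) (v : Fin r → ℝ) (M : Matrix (Fin r) (Fin r) ℝ)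
    (x : Unit ⊕ Fin r → ℝ) :
    x ⬝ᵥ (bmat c v M *ᵥ x) =
      c * (x (Sum.inl ())) ^ 2 + 2 * (x (Sum.inl ())) * (v ⬝ᵥ (x ∘ Sum.inr))
        + (x ∘ Sum.inr) ⬝ᵥ (M *ᵥ (x ∘ Sum.inr)) := by
  simp only [bmat, dotProduct, mulVec, Fintype.sum_sum_type, Finset.univ_unique,
    Finset.sum_singleton, Matrix.fromBlocks_apply₁₁, Matrix.fromBlocks_apply₁₂,
    Matrix.fromBlocks_apply₂₁, Matrix.fromBlocks_apply₂₂, Matrix.of_apply,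
    Function.comp_apply]
  simp only [mul_add, Finset.sum_add_distrib, Finset.mul_sum]
  have e : ∑ i, x (Sum.inr i) * (v i * x (Sum.inl default))
      = ∑ i, x (Sum.inl ()) * (v i * x (Sum.inr i)) :=
    Finset.sum_congr rfl (fun i _ => by ring)
  rw [e]
  have e2 : ∑ i, x (Sum.inl ()) * (v i * x (Sum.inr i))
      = x (Sum.inl ()) * (v ⬝ᵥ (x ∘ Sum.inr)) := by
    rw [dotProduct, Finset.mul_sum]
    exact Finset.sum_congr rfl (fun i _ => by simp [Function.comp])
  rw [e2]
  have e4 : ∑ i, 2 * x (Sum.inl ()) * (v i * x (Sum.inr i))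
      = 2 * x (Sum.inl ()) * (v ⬝ᵥ (x ∘ Sum.inr)) := by
    rw [dotProduct, Finset.mul_sum]
    exact Finset.sum_congr rfl (fun i _ => by simp [Function.comp])
  rw [e4]
  ring

lemma bmat_herm {c : ℝ} {v : Fin r → ℝ} {M : Matrix (Fin r) (Fin r) ℝ}
    (hM : M.IsHermitian) : (bmat c v M).IsHermitian := by
  ext i j
  rcases i with i | i <;> rcases j with j | j <;>
    simp [bmat, conjTranspose_apply, Matrix.fromBlocks]
  simpa using (congrFun (congrFun hM j) i).symm

lemma discrim_le {α β γ : ℝ} (hα : 0 ≤ α) (h : ∀ t : ℝ, 0 ≤ α * t ^ 2 + 2 * β * t + γ) :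
    β ^ 2 ≤ α * γ := by
  rcases eq_or_lt_of_le hα with h0 | h0
  · have hβ : β = 0 := by
      by_contra hb
      have h1 := h ((-γ - 1) / (2 * β))
      rw [← h0] at h1
      have h2 : 2 * β * ((-γ - 1) / (2 * β)) = -γ - 1 := by field_simp
      rw [zero_mul, zero_add, h2] at h1
      linarith
    have hγ : 0 ≤ γ := by simpa using h 0
    rw [hβ, ← h0]
    simp
  · have h1 := h (-β / α)
    have h2 : -β / α * α = -β := by field_simp
    nlinarith [h1, h2]

end Aux

set_option maxHeartbeats 1000000 in
/-- **specialized nonstrict S-lemma.** Let `N ∈ Π_{1,r}` (i.e. `N₂₂ < 0`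
and Schur complement `N|N₂₂ ≥ 0`), `a ∈ ℝ`, `λ ∈ ℝ^r`.  Then `λᵀz + a ≥ 0` for all
`z ∈ Z_r(N)` iff the matrix
`[[-λᵀN₂₂⁻¹N₂₁ + a, (N|N₂₂)^(1/2) λᵀ], [(N|N₂₂)^(1/2) λ, (λᵀN₂₂⁻¹N₂₁ - a) N₂₂]]`
is positive semidefinite. -/
theorem nonneg_on_Zset_iff_posSemidef {r : ℕ} (N11 : ℝ) (N21 : Fin r → ℝ)
    (N22 : Matrix (Fin r) (Fin r) ℝ) (hN22 : (-N22).PosDef)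
    (hschur : 0 ≤ N11 - N21 ⬝ᵥ N22⁻¹ *ᵥ N21) (a : ℝ) (l : Fin r → ℝ) :
    (∀ z ∈ Zset N11 N21 N22, 0 ≤ l ⬝ᵥ z + a) ↔
      (bmat (-(l ⬝ᵥ N22⁻¹ *ᵥ N21) + a)
        (Real.sqrt (N11 - N21 ⬝ᵥ N22⁻¹ *ᵥ N21) • l)
        ((l ⬝ᵥ N22⁻¹ *ᵥ N21 - a) • N22)).PosSemidef := by
  have hA : (-N22).PosDef := hN22
  set A := -N22 with hAdef
  have hN22A : N22 = -A := by rw [hAdef, neg_neg]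
  have hdet : IsUnit A.det := hA.det_pos.ne'.isUnit
  have hAinv : A⁻¹.PosDef := hA.inv
  have hAA : A * A⁻¹ = 1 := mul_nonsing_inv A hdet
  have hinv : N22⁻¹ = -A⁻¹ := by
    rw [hN22A]
    exact inv_eq_right_inv (by rw [neg_mul_neg, hAA])
  set z₀ := A⁻¹ *ᵥ N21 with hz₀
  have hAz₀ : A *ᵥ z₀ = N21 := by rw [hz₀, mulVec_mulVec, hAA, one_mulVec]
  set s := N11 - N21 ⬝ᵥ N22⁻¹ *ᵥ N21 with hs
  set q := l ⬝ᵥ (A⁻¹ *ᵥ l) with hq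
  set u := A⁻¹ *ᵥ l with hu
  have hAu : A *ᵥ u = l := by rw [hu, mulVec_mulVec, hAA, one_mulVec]
  have huq : l ⬝ᵥ u = q := rfl
  set c := -(l ⬝ᵥ N22⁻¹ *ᵥ N21) + a with hc
  have hc' : c = l ⬝ᵥ z₀ + a := by
    rw [hc, hinv, neg_mulVec, dotProduct_neg, neg_neg, hz₀]
  have hs' : s = N11 + N21 ⬝ᵥ z₀ := by
    rw [hs, hinv, neg_mulVec, dotProduct_neg, hz₀]; ring
  have hs0 : 0 ≤ s := hschur
  have hq0 : 0 ≤ q := psd_dot hAinv.posSemidef l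
  have hiden : ∀ z, N11 + 2 * (N21 ⬝ᵥ z) + z ⬝ᵥ N22 *ᵥ z
      = s - (z - z₀) ⬝ᵥ (A *ᵥ (z - z₀)) := by
    intro z
    have h1 : z₀ ⬝ᵥ (A *ᵥ z) = N21 ⬝ᵥ z := by rw [symm_dot hA.1, hAz₀]
    have h2 : z ⬝ᵥ (A *ᵥ z₀) = N21 ⬝ᵥ z := by rw [hAz₀, dotProduct_comm]
    have h3 : z₀ ⬝ᵥ (A *ᵥ z₀) = N21 ⬝ᵥ z₀ := by rw [hAz₀, dotProduct_comm]
    have h4 : z ⬝ᵥ N22 *ᵥ z = -(z ⬝ᵥ (A *ᵥ z)) := by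
      rw [hN22A, neg_mulVec, dotProduct_neg]
    rw [hs', h4]
    simp only [sub_eq_add_neg, mulVec_add, mulVec_neg, dotProduct_add, add_dotProduct,
      dotProduct_neg, neg_dotProduct, h1, h2, h3]
    ring
  have main1 : (∀ z ∈ Zset N11 N21 N22, 0 ≤ l ⬝ᵥ z + a) ↔ (0 ≤ c ∧ s * q ≤ c ^ 2) := by
    constructor
    · intro h
      have hz₀mem : z₀ ∈ Zset N11 N21 N22 := by
        simp only [Zset, Set.mem_setOf_eq]
        rw [hiden z₀]
        simpa using hs0
      have hc0 : 0 ≤ c := by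
        have := h z₀ hz₀mem
        rwa [← hc'] at this
      refine ⟨hc0, ?_⟩
      rcases eq_or_lt_of_le hq0 with h0 | h0
      · rw [← h0, mul_zero]
        positivity
      · set t := Real.sqrt (s / q) with ht
        have ht0 : 0 ≤ t := Real.sqrt_nonneg _
        have ht2 : t ^ 2 = s / q := Real.sq_sqrt (div_nonneg hs0 hq0)
        have hq' : q ≠ 0 := ne_of_gt h0
        have ht2' : t ^ 2 * q = s := by rw [ht2]; field_simp
        have hmem : z₀ - t • u ∈ Zset N11 N21 N22 := by
          simp only [Zset, Set.mem_setOf_eq]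
          rw [hiden (z₀ - t • u)]
          have e : z₀ - t • u - z₀ = -(t • u) := by
            funext i; simp
          rw [e]
          have e2 : (-(t • u)) ⬝ᵥ (A *ᵥ (-(t • u))) = t ^ 2 * q := by
            have h5 : u ⬝ᵥ (A *ᵥ u) = q := by rw [hAu, dotProduct_comm, huq]
            simp only [mulVec_neg, dotProduct_neg, neg_dotProduct, neg_neg, mulVec_smul,
              dotProduct_smul, smul_dotProduct, smul_eq_mul, h5]
            ring
          rw [e2, ht2']
          simp
        have hval := h _ hmem
        have e3 : l ⬝ᵥ (z₀ - t • u) + a = c - t * q := by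
          rw [sub_eq_add_neg, dotProduct_add, dotProduct_neg, dotProduct_smul,
            smul_eq_mul, huq, hc']
          ring
        rw [e3] at hval
        nlinarith [hval, ht2', mul_nonneg ht0 hq0, hc0, h0]
    · rintro ⟨hc0, hsq⟩ z hz
      simp only [Zset, Set.mem_setOf_eq, hiden z] at hz
      have hz' : (z - z₀) ⬝ᵥ (A *ᵥ (z - z₀)) ≤ s := by linarith
      have hcs := cs hA l (z - z₀)
      have hx := psd_dot hA.posSemidef (z - z₀)
      have e : l ⬝ᵥ z + a = c + l ⬝ᵥ (z - z₀) := by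
        rw [hc', dotProduct_sub]
        ring
      rw [e]
      rw [← hq] at hcs
      nlinarith [hcs, hx, hz', hq0, hc0, hsq]
  rw [main1]
  have harg : (l ⬝ᵥ N22⁻¹ *ᵥ N21 - a) • N22 = c • A := by
    have e : l ⬝ᵥ N22⁻¹ *ᵥ N21 - a = -c := by rw [hc]; ring
    rw [e, hN22A, neg_smul_neg]
  rw [harg]
  constructor
  · rintro ⟨hc0, hsq⟩
    refine PosSemidef.of_dotProduct_mulVec_nonneg (bmat_herm ?_) ?_
    · show (c • A)ᴴ = c • A
      rw [conjTranspose_smul, hA.1.eq]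
      simp
    · intro x
      rw [star_trivial, bmat_quad]
      set t := x (Sum.inl ()) with htdef
      set y := x ∘ Sum.inr with hydef
      have e1 : (Real.sqrt s • l) ⬝ᵥ y = Real.sqrt s * (l ⬝ᵥ y) := by
        rw [smul_dotProduct, smul_eq_mul]
      have e2 : y ⬝ᵥ ((c • A) *ᵥ y) = c * (y ⬝ᵥ (A *ᵥ y)) := by
        rw [smul_mulVec, dotProduct_smul, smul_eq_mul]
      rw [e1, e2]
      have hcs := cs hA l y
      rw [← hq] at hcs
      have hyA := psd_dot hA.posSemidef y
      have hsqrt : Real.sqrt s ^ 2 = s := Real.sq_sqrt hs0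
      clear_value A z₀ u q s c t y
      rcases eq_or_lt_of_le hc0 with h0 | h0
      · have hsq0 : s * q = 0 := le_antisymm (by nlinarith) (mul_nonneg hs0 hq0)
        have hzr : Real.sqrt s * (l ⬝ᵥ y) = 0 := by
          have h1 : (Real.sqrt s * (l ⬝ᵥ y)) ^ 2 ≤ 0 := by nlinarith [hcs, hyA]
          nlinarith [sq_nonneg (Real.sqrt s * (l ⬝ᵥ y))]
        rw [hzr, ← h0]
        simp
      · have hint1 : 0 ≤ s * (q * (y ⬝ᵥ (A *ᵥ y)) - (l ⬝ᵥ y) ^ 2) :=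
          mul_nonneg hs0 (by linarith)
        have hint2 : 0 ≤ (y ⬝ᵥ (A *ᵥ y)) * (c ^ 2 - s * q) :=
          mul_nonneg hyA (by linarith)
        nlinarith [sq_nonneg (c * t + Real.sqrt s * (l ⬝ᵥ y)), hint1, hint2, hsqrt, h0]
  · intro hB
    have hquad : ∀ x, 0 ≤ x ⬝ᵥ (bmat c (Real.sqrt s • l) (c • A) *ᵥ x) := by
      intro x
      simpa using hB.dotProduct_mulVec_nonneg x
    have hc0 : 0 ≤ c := by
      have h1 := hquad (Sum.elim (fun _ => 1) 0)
      rw [bmat_quad] at h1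
      simpa using h1
    refine ⟨hc0, ?_⟩
    have key : ∀ t : ℝ, 0 ≤ c * t ^ 2 + 2 * (Real.sqrt s * q) * t + c * q := by
      intro t
      have h1 := hquad (Sum.elim (fun _ => t) u)
      rw [bmat_quad] at h1
      simp only [Sum.elim_inl, Sum.elim_comp_inr] at h1
      have e1 : (Real.sqrt s • l) ⬝ᵥ u = Real.sqrt s * q := by
        rw [smul_dotProduct, smul_eq_mul, huq]
      have e2 : u ⬝ᵥ ((c • A) *ᵥ u) = c * q := by
        rw [smul_mulVec, hAu, dotProduct_smul, smul_eq_mul, dotProduct_comm, huq]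
      rw [e1, e2] at h1
      linarith [h1]
    have hd := discrim_le hc0 key
    have hsqrt : Real.sqrt s ^ 2 = s := Real.sq_sqrt hs0
    rcases eq_or_lt_of_le hq0 with h0 | h0
    · rw [← h0, mul_zero]
      positivity
    · rw [mul_pow, hsqrt] at hd
      nlinarith [hd, h0]
end
end

section
/- (Specialized strict S-lemma, equivalence (i)⇔(iii).) Let N ∈ Π_{1,r}, a ∈ ℝ, and λ ∈ ℝ^r. Then λᵀz + a > 0 for all z ∈ Z_r(N) if and only if there exists a scalar β > 0 such that the symmetric (1+r)×(1+r) matrix [[−λᵀN₂₂⁻¹N₂₁ + a − β, (N|N₂₂)^(1/2) λᵀ],[(N|N₂₂)^(1/2) λ, (λᵀN₂₂⁻¹N₂₁ − a) N₂₂]] is positive semidefinite. -/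
open Matrix

noncomputable section

lemma bmat_isHermitian {r : ℕ} (c : ℝ) (l : Fin r → ℝ) (M : Matrix (Fin r) (Fin r) ℝ)
    (hM : Mᵀ = M) : (bmat c l M).IsHermitian := by
  have : ∀ i j, M j i = M i j := fun i j => congrFun (congrFun hM i) j
  unfold Matrix.IsHermitian
  ext i j
  rcases i with i | i <;> rcases j with j | j <;>
    simp [bmat, Matrix.conjTranspose_apply, this]

lemma bmat_form {r : ℕ} (c : ℝ) (l : Fin r → ℝ) (M : Matrix (Fin r) (Fin r) ℝ)
    (t : ℝ) (v : Fin r → ℝ) :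
    Sum.elim (fun _ : Unit => t) v ⬝ᵥ bmat c l M *ᵥ Sum.elim (fun _ : Unit => t) v
      = c * t * t + 2 * (t * (l ⬝ᵥ v)) + v ⬝ᵥ M *ᵥ v := by
  have h1 : (Matrix.of fun (_ : Unit) (_ : Unit) => c) *ᵥ (fun _ : Unit => t)
      = fun _ : Unit => c * t := by
    funext i; simp [Matrix.mulVec, dotProduct]
  have h2 : (Matrix.of fun (_ : Unit) j => l j) *ᵥ v = fun _ : Unit => l ⬝ᵥ v := by
    funext i; simp [Matrix.mulVec, dotProduct]
  have h3 : (Matrix.of fun i (_ : Unit) => l i) *ᵥ (fun _ : Unit => t) = t • l := by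
    funext i; simp [Matrix.mulVec, dotProduct, mul_comm]
  have h4 : ∀ A B : ℝ, (fun _ : Unit => A) ⬝ᵥ (fun _ : Unit => B) = A * B := by
    intro A B; simp [dotProduct]
  rw [bmat, Matrix.fromBlocks_mulVec, Sum.elim_comp_inl, Sum.elim_comp_inr,
    sumElim_dotProduct_sumElim, h1, h2, h3,
    dotProduct_add, dotProduct_add, h4, h4, dotProduct_smul,
    dotProduct_comm v l]
  push_cast [smul_eq_mul]
  ring

lemma sum_elim_eq {r : ℕ} (x : Unit ⊕ Fin r → ℝ) :
    x = Sum.elim (fun _ : Unit => x (Sum.inl ())) (x ∘ Sum.inr) := by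
  funext i
  rcases i with i | i
  · cases i; rfl
  · rfl

lemma scalar_psd (σ q c t L g β : ℝ) (hq0 : 0 ≤ q) (hc0 : 0 < c)
    (hβc : β * c = c ^ 2 - σ * σ * q) (hcs : L ^ 2 ≤ q * g) (hg : 0 ≤ g) :
    0 ≤ (c - β) * t * t + 2 * (t * (σ * L)) + c * g := by
  rcases hq0.eq_or_lt with hq | hq
  · have hL : L = 0 := by nlinarith [sq_nonneg L]
    have hb : β ≤ c := by nlinarith
    rw [hL]
    nlinarith [mul_nonneg (sub_nonneg.2 hb) (mul_self_nonneg t), mul_nonneg hc0.le hg]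
  · nlinarith [sq_nonneg (q * (σ * t) + c * L), mul_le_mul_of_nonneg_left hcs (sq_nonneg c),
      mul_pos hq hc0, mul_nonneg hq.le (mul_self_nonneg t), hg, hc0]

/-- **specialized strict S-lemma, (i) ⇔ (iii).** Let `N ∈ Π_{1,r}` (i.e.
`N₂₂ < 0` and Schur complement `N|N₂₂ ≥ 0`), `a ∈ ℝ`, `λ ∈ ℝ^r`.  Then `λᵀz + a > 0`
for all `z ∈ Z_r(N)` iff there exists `β > 0` such that the matrix
`[[-λᵀN₂₂⁻¹N₂₁ + a - β, (N|N₂₂)^(1/2) λᵀ], [(N|N₂₂)^(1/2) λ, (λᵀN₂₂⁻¹N₂₁ - a) N₂₂]]`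
is positive semidefinite. -/
theorem pos_on_Zset_iff_exists_posSemidef {r : ℕ} (N11 : ℝ) (N21 : Fin r → ℝ)
    (N22 : Matrix (Fin r) (Fin r) ℝ) (hN22 : (-N22).PosDef)
    (hschur : 0 ≤ N11 - N21 ⬝ᵥ N22⁻¹ *ᵥ N21) (a : ℝ) (l : Fin r → ℝ) :
    (∀ z ∈ Zset N11 N21 N22, 0 < l ⬝ᵥ z + a) ↔
      ∃ β : ℝ, 0 < β ∧
        (bmat (-(l ⬝ᵥ N22⁻¹ *ᵥ N21) + a - β)
          (Real.sqrt (N11 - N21 ⬝ᵥ N22⁻¹ *ᵥ N21) • l)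
          ((l ⬝ᵥ N22⁻¹ *ᵥ N21 - a) • N22)).PosSemidef := by
  classical
  set m : Fin r → ℝ := N22⁻¹ *ᵥ N21 with hm
  set u : Fin r → ℝ := N22⁻¹ *ᵥ l with hu
  set s : ℝ := N11 - N21 ⬝ᵥ m with hsdef
  set c : ℝ := a - l ⬝ᵥ m with hcdef
  set q : ℝ := -(l ⬝ᵥ u) with hqdef
  have hs0 : 0 ≤ s := hschur
  -- basic matrix facts
  have hsymm : N22ᵀ = N22 := by
    have h := hN22.1
    have h2 : (-N22)ᵀ = -N22 := h
    have := congrArg Neg.neg h2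
    simpa using this
  have hdet : IsUnit N22.det := by
    have hpos : 0 < (-N22).det := hN22.det_pos
    rw [Matrix.det_neg] at hpos
    rcases eq_or_ne N22.det 0 with h | h
    · rw [h] at hpos; simp at hpos
    · exact isUnit_iff_ne_zero.2 h
  have hNi : N22 * N22⁻¹ = 1 := Matrix.mul_nonsing_inv _ hdet
  have hNm : N22 *ᵥ m = N21 := by
    rw [hm, Matrix.mulVec_mulVec, hNi, Matrix.one_mulVec]
  have hNu : N22 *ᵥ u = l := by
    rw [hu, Matrix.mulVec_mulVec, hNi, Matrix.one_mulVec]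
  have sym2 : ∀ x y : Fin r → ℝ, x ⬝ᵥ N22 *ᵥ y = y ⬝ᵥ N22 *ᵥ x := by
    intro x y
    rw [Matrix.dotProduct_mulVec, ← Matrix.mulVec_transpose, hsymm, dotProduct_comm]
  -- q ≥ 0
  have hinv : (-N22)⁻¹ = -(N22⁻¹) := by
    apply Matrix.inv_eq_right_inv
    rw [Matrix.neg_mul, Matrix.mul_neg, neg_neg, hNi]
  have hq0 : 0 ≤ q := by
    have := hN22.inv.posSemidef.dotProduct_mulVec_nonneg l
    rw [hinv] at this
    simpa [Matrix.neg_mulVec, hqdef, hu] using this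
  -- generic expansion
  have expand : ∀ x y : Fin r → ℝ, (x + y) ⬝ᵥ N22 *ᵥ (x + y)
      = x ⬝ᵥ N22 *ᵥ x + 2 * (x ⬝ᵥ N22 *ᵥ y) + y ⬝ᵥ N22 *ᵥ y := by
    intro x y
    rw [Matrix.mulVec_add, dotProduct_add, add_dotProduct,
      add_dotProduct, sym2 y x]
    ring
  -- the completed-square identity
  have key : ∀ z : Fin r → ℝ,
      N11 + 2 * (N21 ⬝ᵥ z) + z ⬝ᵥ N22 *ᵥ z = s + (z + m) ⬝ᵥ N22 *ᵥ (z + m) := by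
    intro z
    rw [expand z m, hNm, dotProduct_comm z N21, dotProduct_comm m N21, hsdef]
    ring
  -- value identity
  have val : ∀ z : Fin r → ℝ, l ⬝ᵥ z + a = c + l ⬝ᵥ (z + m) := by
    intro z
    rw [dotProduct_add, hcdef]; ring
  -- Cauchy–Schwarz
  have CS : ∀ w : Fin r → ℝ, (l ⬝ᵥ w) ^ 2 ≤ q * (-(w ⬝ᵥ N22 *ᵥ w)) := by
    intro w
    have hquad : ∀ t : ℝ, 0 ≤ q * (t * t) + (2 * (l ⬝ᵥ w)) * t + (-(w ⬝ᵥ N22 *ᵥ w)) := by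
      intro t
      have h := hN22.posSemidef.dotProduct_mulVec_nonneg (w + (-t) • u)
      have hst : star (w + (-t) • u) = w + (-t) • u := by simp
      rw [hst, Matrix.neg_mulVec, dotProduct_neg] at h
      have e : (w + (-t) • u) ⬝ᵥ N22 *ᵥ (w + (-t) • u)
          = w ⬝ᵥ N22 *ᵥ w + 2 * (-t) * (l ⬝ᵥ w) + (-t) * ((-t) * (l ⬝ᵥ u)) := by
        rw [expand, Matrix.mulVec_smul, hNu, smul_dotProduct,
          dotProduct_smul, dotProduct_smul, smul_eq_mul, smul_eq_mul,
          smul_eq_mul, dotProduct_comm w l, dotProduct_comm u l]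
        ring
      rw [e] at h
      rw [hqdef]
      nlinarith [h]
    have hd := discrim_le_zero hquad
    rw [discrim] at hd
    nlinarith [hd]
  have sqrtsq : Real.sqrt s * Real.sqrt s = s := Real.mul_self_sqrt hs0
  have sqrtqq : Real.sqrt q * Real.sqrt q = q := Real.mul_self_sqrt hq0
  -- membership niceties
  have memZ : ∀ z : Fin r → ℝ, z ∈ Zset N11 N21 N22 ↔ 0 ≤ s + (z + m) ⬝ᵥ N22 *ᵥ (z + m) := by
    intro z
    simp only [Zset, Set.mem_setOf_eq, key z]
  constructor
  · -- (i) ⇒ (iii)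
    intro hi
    -- first, the scalar condition √(s q) < c
    have hc0 : 0 < c := by
      have hmem : (-m) ∈ Zset N11 N21 N22 := by
        rw [memZ]
        have : (-m : Fin r → ℝ) + m = 0 := by abel
        rw [this]
        simpa using hs0
      have := hi (-m) hmem
      have hv := val (-m)
      have h0 : (-m : Fin r → ℝ) + m = 0 := by abel
      rw [hv, h0] at this
      simpa using this
    have hP : Real.sqrt (s * q) < c := by
      rcases hq0.eq_or_lt with hq | hq
      · rw [← hq, mul_zero, Real.sqrt_zero]; exact hc0
      · have hsq : 0 < Real.sqrt q := Real.sqrt_pos.2 hq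
        set t : ℝ := Real.sqrt s / Real.sqrt q with htdef
        have ht2 : t * t * q = s := by
          rw [htdef, div_mul_div_comm, sqrtsq, sqrtqq, div_mul_cancel₀ _ (ne_of_gt hq)]
        have htq : t * q = Real.sqrt (s * q) := by
          rw [Real.sqrt_mul hs0, htdef, div_mul_eq_mul_div, div_eq_iff (ne_of_gt hsq),
            mul_assoc, sqrtqq]
        set z : Fin r → ℝ := -m + t • u with hzdef
        have hzm : z + m = t • u := by rw [hzdef]; abel
        have htu : (t • u) ⬝ᵥ N22 *ᵥ (t • u) = t * (t * (l ⬝ᵥ u)) := by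
          rw [Matrix.mulVec_smul, hNu, smul_dotProduct, dotProduct_smul,
            smul_eq_mul, smul_eq_mul, dotProduct_comm u l]
        have hlu : l ⬝ᵥ u = -q := by rw [hqdef]; ring
        have hmem : z ∈ Zset N11 N21 N22 := by
          rw [memZ, hzm, htu, hlu]
          nlinarith [ht2]
        have := hi z hmem
        rw [val z, hzm] at this
        have hlz : l ⬝ᵥ (t • u) = t * (l ⬝ᵥ u) := by
          rw [dotProduct_smul, smul_eq_mul]
        rw [hlz, hlu] at this
        nlinarith [this, htq]
    -- now build β
    have hsq0 : 0 ≤ Real.sqrt (s * q) := Real.sqrt_nonneg _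
    have hsqlt : s * q < c ^ 2 := by
      nlinarith [Real.sq_sqrt (mul_nonneg hs0 hq0), hP, hsq0]
    refine ⟨(c ^ 2 - s * q) / c, div_pos (sub_pos.2 hsqlt) hc0,
      Matrix.PosSemidef.of_dotProduct_mulVec_nonneg ?_ ?_⟩
    · apply bmat_isHermitian
      rw [Matrix.transpose_smul, hsymm]
    · intro x
      have hst : star x = x := by simp
      rw [hst]
      conv_rhs => rw [sum_elim_eq x]
      rw [bmat_form]
      set t := x (Sum.inl ()) with htdef
      set v := x ∘ Sum.inr with hvdef
      have hsd : (Real.sqrt s • l) ⬝ᵥ v = Real.sqrt s * (l ⬝ᵥ v) := by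
        rw [smul_dotProduct, smul_eq_mul]
      have hblock : v ⬝ᵥ ((l ⬝ᵥ m - a) • N22) *ᵥ v = (l ⬝ᵥ m - a) * (v ⬝ᵥ N22 *ᵥ v) := by
        rw [Matrix.smul_mulVec, dotProduct_smul, smul_eq_mul]
      rw [hsd, hblock]
      have hg : 0 ≤ -(v ⬝ᵥ N22 *ᵥ v) := by
        have h := hN22.posSemidef.dotProduct_mulVec_nonneg v
        have hsv : star v = v := by simp
        rw [hsv, Matrix.neg_mulVec, dotProduct_neg] at h
        exact h
      have hcs := CS v
      set L := l ⬝ᵥ v with hLdef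
      set g := -(v ⬝ᵥ N22 *ᵥ v) with hgdef
      have hvg : v ⬝ᵥ N22 *ᵥ v = -g := by rw [hgdef]; ring
      rw [hvg]
      -- pure scalar inequality now
      set β := (c ^ 2 - s * q) / c with hβdef
      have hβc : β * c = c ^ 2 - s * q := div_mul_cancel₀ _ (ne_of_gt hc0)
      have hgoal : (-(l ⬝ᵥ m) + a - β) * t * t + 2 * (t * (Real.sqrt s * L)) + (l ⬝ᵥ m - a) * -g
          = (c - β) * t * t + 2 * (t * (Real.sqrt s * L)) + c * g := by
        rw [hcdef]; ring
      rw [hgoal]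
      have hβc2 : β * c = c ^ 2 - Real.sqrt s * Real.sqrt s * q := by
        rw [sqrtsq]; exact hβc
      exact scalar_psd (Real.sqrt s) q c t L g β hq0 hc0 hβc2 hcs hg
  · -- (iii) ⇒ (i)
    rintro ⟨β, hβ, hpsd0⟩ z hz
    obtain ⟨hherm, hpsd⟩ := Matrix.posSemidef_iff_dotProduct_mulVec.mp hpsd0
    -- extract the scalar condition
    have h1 := hpsd (Sum.elim (fun _ : Unit => (1 : ℝ)) 0)
    have hst1 : star (Sum.elim (fun _ : Unit => (1 : ℝ)) (0 : Fin r → ℝ))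
        = Sum.elim (fun _ : Unit => (1 : ℝ)) 0 := by simp
    rw [hst1, bmat_form] at h1
    simp only [dotProduct_zero, Matrix.mulVec_zero, zero_dotProduct,
      mul_zero, add_zero, mul_one] at h1
    have hc0 : 0 < c := by rw [hcdef]; nlinarith [h1, hβ]
    have hlu : l ⬝ᵥ u = -q := by rw [hqdef]; ring
    have hP : Real.sqrt (s * q) < c := by
      rcases hq0.eq_or_lt with hq | hq
      · rw [← hq, mul_zero, Real.sqrt_zero]; exact hc0
      · -- test vector (c, √s • u)
        set v : Fin r → ℝ := Real.sqrt s • u with hvdef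
        have h2 := hpsd (Sum.elim (fun _ : Unit => c) v)
        have hst2 : star (Sum.elim (fun _ : Unit => c) v) = Sum.elim (fun _ : Unit => c) v := by
          simp
        rw [hst2, bmat_form] at h2
        have hlv : (Real.sqrt s • l) ⬝ᵥ v = Real.sqrt s * (Real.sqrt s * (l ⬝ᵥ u)) := by
          rw [hvdef, smul_dotProduct, dotProduct_smul, smul_eq_mul, smul_eq_mul]
        have hvNv : v ⬝ᵥ ((l ⬝ᵥ m - a) • N22) *ᵥ v
            = (l ⬝ᵥ m - a) * (Real.sqrt s * (Real.sqrt s * (l ⬝ᵥ u))) := by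
          rw [hvdef, Matrix.smul_mulVec, dotProduct_smul,
            smul_dotProduct, Matrix.mulVec_smul, hNu, dotProduct_smul,
            dotProduct_comm u l]
          simp only [smul_eq_mul]
          try ring
        rw [hlv, hvNv, hlu] at h2
        -- h2 : 0 ≤ (-(l⬝ᵥm)+a-β)*c*c + 2*(c*(√s*(√s*(-q)))) + (l⬝ᵥm-a)*(√s*(√s*(-q)))
        have e : (-(l ⬝ᵥ m) + a - β) * c * c + 2 * (c * (Real.sqrt s * (Real.sqrt s * -q)))
            + (l ⬝ᵥ m - a) * (Real.sqrt s * (Real.sqrt s * -q))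
            = (c - β) * (c * c) - c * (s * q) := by
          rw [hcdef]
          linear_combination (-((a - l ⬝ᵥ m) * q)) * sqrtsq
        rw [e] at h2
        have hsq : s * q < c ^ 2 := by
          nlinarith [h2, hβ, hc0, mul_pos hβ (mul_pos hc0 hc0)]
        calc Real.sqrt (s * q) < Real.sqrt (c ^ 2) := by
              exact Real.sqrt_lt_sqrt (mul_nonneg hs0 hq0) hsq
          _ = c := by rw [Real.sqrt_sq hc0.le]
    -- now conclude positivity on Zset
    have hzZ : 0 ≤ s + (z + m) ⬝ᵥ N22 *ᵥ (z + m) := (memZ z).1 hz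
    set w := z + m with hwdef
    have hA : -(w ⬝ᵥ N22 *ᵥ w) ≤ s := by linarith
    have h1' : (l ⬝ᵥ w) ^ 2 ≤ q * s := le_trans (CS w) (mul_le_mul_of_nonneg_left hA hq0)
    have h2' : |l ⬝ᵥ w| ≤ Real.sqrt (s * q) := by
      rw [← Real.sqrt_sq_eq_abs]
      apply Real.sqrt_le_sqrt
      linarith
    have h3' := (abs_le.1 h2').1
    rw [val z]
    linarith
end
end

section
/- (Pointwise multiplier S-lemma for a strict linear inequality.) Let N ∈ Π_{1,r}, a ∈ ℝ, and λ ∈ ℝ^r. Then λᵀz + a > 0 for all z ∈ Z_r(N) if and only if there exist scalars γ ≥ 0 and β > 0 such that [[2a, λᵀ],[λ, 0]] − γN ⪰ [[β, 0],[0, 0]], i.e., the symmetric (1+r)×(1+r) matrix [[2a − β, λᵀ],[λ, 0]] − γN is positive semidefinite. -/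
open Matrix

noncomputable section

namespace SLemmaAux

variable {r : ℕ}

lemma dot_symm {M : Matrix (Fin r) (Fin r) ℝ} (hM : Mᵀ = M) (x y : Fin r → ℝ) :
    x ⬝ᵥ M *ᵥ y = y ⬝ᵥ M *ᵥ x := by
  rw [dotProduct_mulVec, ← mulVec_transpose, hM, dotProduct_comm]

lemma posdef_smul {M : Matrix (Fin r) (Fin r) ℝ} (hM : M.PosDef) {γ : ℝ} (hγ : 0 < γ) :
    (γ • M).PosDef := by
  refine posDef_iff_dotProduct_mulVec.mpr ⟨?_, fun x hx => ?_⟩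
  · have := hM.1
    simp only [IsHermitian, conjTranspose_smul] at this ⊢
    have h2 : Mᵀ = M := this
    simp [h2]
  · rw [smul_mulVec, dotProduct_smul, smul_eq_mul]
    exact mul_pos hγ (hM.dotProduct_mulVec_pos hx)

lemma quad_eval (c : ℝ) (l : Fin r → ℝ) (M : Matrix (Fin r) (Fin r) ℝ) (z : Fin r → ℝ) :
    (Sum.elim (fun _ => (1:ℝ)) z) ⬝ᵥ (bmat c l M) *ᵥ (Sum.elim (fun _ => (1:ℝ)) z)
      = c + 2 * (l ⬝ᵥ z) + z ⬝ᵥ M *ᵥ z := by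
  simp [bmat, fromBlocks_mulVec, sumElim_dotProduct_sumElim, mulVec, dotProduct,
    mul_add, Finset.sum_add_distrib]
  rw [Finset.sum_congr rfl (fun i _ => mul_comm (z i) (l i))]
  ring

lemma bmat_sub_smul (c1 c2 : ℝ) (l1 l2 : Fin r → ℝ) (M1 M2 : Matrix (Fin r) (Fin r) ℝ)
    (γ : ℝ) :
    bmat c1 l1 M1 - γ • bmat c2 l2 M2
      = bmat (c1 - γ * c2) (fun i => l1 i - γ * l2 i) (M1 - γ • M2) := by
  ext i j
  rcases i with i | i <;> rcases j with j | j <;>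
    simp [bmat, fromBlocks, smul_eq_mul]

lemma posSemidef_unit (X : Matrix Unit Unit ℝ) (hX : 0 ≤ X () ()) : X.PosSemidef := by
  rw [posSemidef_iff_dotProduct_mulVec]
  constructor
  · ext i j
    simp [conjTranspose_apply]
  · intro x
    have : star x ⬝ᵥ X *ᵥ x = X () () * (x () * x ()) := by
      simp [dotProduct, mulVec]
      ring
    rw [this]
    nlinarith

lemma bmat_eq_fromBlocks (c : ℝ) (v : Fin r → ℝ) (D : Matrix (Fin r) (Fin r) ℝ) :
    bmat c v D = fromBlocks (Matrix.of fun _ _ => c) (Matrix.of fun _ j => v j)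
      ((Matrix.of fun (_ : Unit) j => v j)ᴴ) D := by
  congr 1

lemma BXB (v : Fin r → ℝ) (X : Matrix (Fin r) (Fin r) ℝ) :
    ((Matrix.of fun (_ : Unit) j => v j) * X * (Matrix.of fun (_ : Unit) j => v j)ᴴ) () ()
      = v ⬝ᵥ X *ᵥ v := by
  simp [mul_apply, dotProduct, mulVec, Finset.sum_mul, Finset.mul_sum]
  rw [Finset.sum_comm]
  exact Finset.sum_congr rfl fun i _ => Finset.sum_congr rfl fun j _ => by ring

lemma complete_square (N11 : ℝ) (N21 : Fin r → ℝ) (N22 : Matrix (Fin r) (Fin r) ℝ)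
    (hN22 : (-N22).PosDef) (z : Fin r → ℝ) :
    N11 + 2 * (N21 ⬝ᵥ z) + z ⬝ᵥ N22 *ᵥ z =
      (N11 - N21 ⬝ᵥ N22⁻¹ *ᵥ N21) -
        (z - (-N22)⁻¹ *ᵥ N21) ⬝ᵥ (-N22) *ᵥ (z - (-N22)⁻¹ *ᵥ N21) := by
  set P := (-N22)⁻¹ with hP
  have hinv : (-N22) * P = 1 := mul_nonsing_inv _ (isUnit_iff_ne_zero.mpr hN22.det_pos.ne')
  have hNi : N22⁻¹ = -P := by
    apply inv_eq_right_inv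
    rw [show N22 * -P = (-N22) * P by noncomm_ring, hinv]
  set z₀ := P *ᵥ N21 with hz₀
  have hNz₀ : (-N22) *ᵥ z₀ = N21 := by rw [hz₀, mulVec_mulVec, hinv, one_mulVec]
  have hsym : (-N22)ᵀ = -N22 := hN22.1
  have h1 : z₀ ⬝ᵥ (-N22) *ᵥ z = z ⬝ᵥ (-N22) *ᵥ z₀ := dot_symm hsym z₀ z
  rw [hNi]
  simp only [mulVec_sub, dotProduct_sub, sub_dotProduct, neg_mulVec, dotProduct_neg,
    neg_dotProduct, hNz₀, h1]
  have hsym' : N22ᵀ = N22 := by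
    have := congrArg Neg.neg hsym
    simpa using this
  have h5 : N22 *ᵥ z₀ = -N21 := by
    have h := hNz₀
    rw [neg_mulVec] at h
    exact neg_eq_iff_eq_neg.mp h
  have h4 : z₀ ⬝ᵥ N22 *ᵥ z = -(N21 ⬝ᵥ z) := by
    rw [dot_symm hsym' z₀ z, h5, dotProduct_neg, dotProduct_comm]
  have h6 : N21 ⬝ᵥ P *ᵥ N21 = z₀ ⬝ᵥ N21 := by
    rw [hz₀, dotProduct_comm]
  rw [h4, h6, dotProduct_comm z N21]
  ring

end SLemmaAux

set_option maxHeartbeats 1000000 in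
open SLemmaAux in
/-- **pointwise multiplier S-lemma for a strict linear inequality.**
Let `N ∈ Π_{1,r}` (i.e. `N₂₂ < 0` and Schur complement `N|N₂₂ ≥ 0`), `a ∈ ℝ`,
`λ ∈ ℝ^r`.  Then `λᵀz + a > 0` for all `z ∈ Z_r(N)` iff there exist `γ ≥ 0` and
`β > 0` such that `[[2a - β, λᵀ], [λ, 0]] - γN` is positive semidefinite, where `N`
is the full matrix `[[N₁₁, N₂₁ᵀ], [N₂₁, N₂₂]]`. -/
theorem pos_on_Zset_iff_multiplier {r : ℕ} (N11 : ℝ) (N21 : Fin r → ℝ)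
    (N22 : Matrix (Fin r) (Fin r) ℝ) (hN22 : (-N22).PosDef)
    (hschur : 0 ≤ N11 - N21 ⬝ᵥ N22⁻¹ *ᵥ N21) (a : ℝ) (l : Fin r → ℝ) :
    (∀ z ∈ Zset N11 N21 N22, 0 < l ⬝ᵥ z + a) ↔
      ∃ γ β : ℝ, 0 ≤ γ ∧ 0 < β ∧
        (bmat (2 * a - β) l 0 - γ • bmat N11 N21 N22).PosSemidef := by
  have hdet : IsUnit (-N22).det := isUnit_iff_ne_zero.mpr hN22.det_pos.ne'
  set P := (-N22)⁻¹ with hPdef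
  have hinv : (-N22) * P = 1 := mul_nonsing_inv _ hdet
  have hNi : N22⁻¹ = -P := by
    apply inv_eq_right_inv
    rw [show N22 * -P = (-N22) * P by noncomm_ring, hinv]
  have hPt : Pᵀ = P := by
    have := hN22.1.inv
    simpa [IsHermitian] using this
  have hPpd : P.PosDef := hN22.inv
  set z₀ := P *ᵥ N21 with hz₀def
  set sc := N11 - N21 ⬝ᵥ N22⁻¹ *ᵥ N21 with hscdef
  have hkey : ∀ z : Fin r → ℝ, N11 + 2 * (N21 ⬝ᵥ z) + z ⬝ᵥ N22 *ᵥ z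
      = sc - (z - z₀) ⬝ᵥ (-N22) *ᵥ (z - z₀) := fun z =>
    complete_square N11 N21 N22 hN22 z
  constructor
  · intro h
    have hz₀Z : z₀ ∈ Zset N11 N21 N22 := by
      simp only [Zset, Set.mem_setOf_eq]
      rw [hkey z₀]
      simpa using hschur
    by_cases hl : l = 0
    · have ha : 0 < a := by simpa [hl] using h z₀ hz₀Z
      refine ⟨0, a, le_refl 0, ha, ?_⟩
      rw [zero_smul, sub_zero, hl]
      refine posSemidef_iff_dotProduct_mulVec.mpr ⟨?_, ?_⟩
      · ext i j
        rcases i with i | i <;> rcases j with j | j <;>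
          simp [bmat, fromBlocks, conjTranspose_apply]
      · intro x
        have hx : star x ⬝ᵥ (bmat (r := r) (2*a - a) 0 0) *ᵥ x
            = (2*a - a) * (x (Sum.inl ()) * x (Sum.inl ())) := by
          simp [bmat, dotProduct, mulVec, Fintype.sum_sum_type, fromBlocks]
          ring
        rw [hx]
        nlinarith [sq_nonneg (x (Sum.inl ()))]
    · have ht : 0 < l ⬝ᵥ P *ᵥ l := by
        have := hPpd.dotProduct_mulVec_pos hl
        simpa using this
      set t := l ⬝ᵥ P *ᵥ l with htdef
      have hPl : (-N22) *ᵥ (P *ᵥ l) = l := by rw [mulVec_mulVec, hinv, one_mulVec]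
      set c := Real.sqrt (sc / t) with hcdef
      have hc2 : c ^ 2 = sc / t := Real.sq_sqrt (div_nonneg hschur ht.le)
      set zs := z₀ - c • (P *ᵥ l) with hzsdef
      have hzsZ : zs ∈ Zset N11 N21 N22 := by
        simp only [Zset, Set.mem_setOf_eq]
        rw [hkey zs]
        have h1 : zs - z₀ = -(c • (P *ᵥ l)) := by
          rw [hzsdef]; abel
        rw [h1]
        have h2 : (-(c • (P *ᵥ l))) ⬝ᵥ (-N22) *ᵥ (-(c • (P *ᵥ l))) = c ^ 2 * t := by
          rw [mulVec_neg, dotProduct_neg, neg_dotProduct, neg_neg, mulVec_smul,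
            smul_dotProduct, dotProduct_smul, hPl, smul_eq_mul, smul_eq_mul,
            dotProduct_comm]
          ring
        rw [h2, hc2]
        have : sc / t * t = sc := by field_simp
        rw [this]
        simp
      have hv := h zs hzsZ
      have hlzs : l ⬝ᵥ zs = l ⬝ᵥ z₀ - c * t := by
        rw [hzsdef, dotProduct_sub, dotProduct_smul, smul_eq_mul]
      set u := Real.sqrt (sc * t) with hudef
      have hu0 : 0 ≤ u := Real.sqrt_nonneg _
      have hu2 : u ^ 2 = sc * t := Real.sq_sqrt (mul_nonneg hschur ht.le)
      have hct : c * t = u := by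
        rw [hcdef, hudef, show sc * t = sc / t * t ^ 2 by field_simp,
          Real.sqrt_mul (div_nonneg hschur ht.le), Real.sqrt_sq ht.le]
      set m' := l ⬝ᵥ z₀ + a with hm'def
      have hd : 0 < m' - u := by
        rw [hlzs, hct] at hv
        rw [hm'def]
        linarith
      set d := m' - u with hddef
      have hden : 0 < u + d / 2 := by linarith
      set γ := t / (u + d / 2) with hγdef
      have hγ : 0 < γ := div_pos ht hden
      have htγ : t / γ = u + d / 2 := by
        rw [hγdef]
        field_simp
      have hkey2 : sc * γ + t / γ + d ≤ 2 * m' := by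
        rw [htγ]
        have hscγ : sc * γ ≤ u + d / 2 := by
          have huu : sc * t = u * u := by rw [← hu2]; ring
          rw [hγdef, ← mul_div_assoc, div_le_iff₀ hden, huu]
          nlinarith [mul_nonneg hu0 hd.le, sq_nonneg d]
        linarith
      refine ⟨γ, d, hγ.le, hd, ?_⟩
      rw [bmat_sub_smul]
      have hDeq : ((0 : Matrix (Fin r) (Fin r) ℝ) - γ • N22) = γ • (-N22) := by
        rw [zero_sub, ← smul_neg]
      rw [hDeq, bmat_eq_fromBlocks]
      have hDpd : (γ • (-N22)).PosDef := posdef_smul hN22 hγ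
      haveI : Invertible (γ • (-N22)) :=
        (γ • (-N22)).invertibleOfIsUnitDet (isUnit_iff_ne_zero.mpr hDpd.det_pos.ne')
      rw [PosDef.fromBlocks₂₂ _ _ hDpd]
      apply posSemidef_unit
      have hDinv : (γ • (-N22))⁻¹ = γ⁻¹ • P := by
        apply inv_eq_right_inv
        rw [Matrix.smul_mul, Matrix.mul_smul, hinv, smul_smul,
          mul_inv_cancel₀ hγ.ne', one_smul]
      rw [Matrix.sub_apply, hDinv, BXB]
      have hsmul : (fun i => l i - γ * N21 i) ⬝ᵥ (γ⁻¹ • P) *ᵥ (fun i => l i - γ * N21 i)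
          = γ⁻¹ * ((fun i => l i - γ * N21 i) ⬝ᵥ P *ᵥ (fun i => l i - γ * N21 i)) := by
        rw [smul_mulVec, dotProduct_smul, smul_eq_mul]
      rw [hsmul]
      have hveq : (fun i => l i - γ * N21 i) = l - γ • N21 := by
        funext i
        simp
      have hvPv : (fun i => l i - γ * N21 i) ⬝ᵥ P *ᵥ (fun i => l i - γ * N21 i)
          = t - 2 * γ * (l ⬝ᵥ z₀) + γ ^ 2 * (N21 ⬝ᵥ z₀) := by
        rw [hveq]
        have hs1 : N21 ⬝ᵥ P *ᵥ l = l ⬝ᵥ P *ᵥ N21 := dot_symm hPt N21 l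
        simp only [sub_dotProduct, mulVec_sub, dotProduct_sub,
          smul_dotProduct, dotProduct_smul, mulVec_smul, smul_eq_mul, hs1]
        rw [← hz₀def, ← htdef]
        ring
      rw [hvPv]
      have hN11 : N11 = sc - N21 ⬝ᵥ z₀ := by
        rw [hscdef, hNi, neg_mulVec, dotProduct_neg, ← hz₀def]
        ring
      have hent : Matrix.of (fun (_ : Unit) (_ : Unit) => 2 * a - d - γ * N11) () ()
          = 2 * a - d - γ * N11 := rfl
      rw [hent, hN11]
      have hexp : γ⁻¹ * (t - 2 * γ * (l ⬝ᵥ z₀) + γ ^ 2 * (N21 ⬝ᵥ z₀))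
          = t / γ - 2 * (l ⬝ᵥ z₀) + γ * (N21 ⬝ᵥ z₀) := by
        field_simp
      rw [hexp]
      rw [hm'def] at hkey2
      linarith [hkey2]
  · rintro ⟨γ, β, hγ, hβ, hpsd⟩ z hz
    have hzq : 0 ≤ N11 + 2 * (N21 ⬝ᵥ z) + z ⬝ᵥ N22 *ᵥ z := hz
    have h0 := hpsd.dotProduct_mulVec_nonneg (Sum.elim (fun _ => (1:ℝ)) z)
    rw [show star (Sum.elim (fun _ => (1:ℝ)) z) = Sum.elim (fun _ => (1:ℝ)) z from rfl] at h0
    rw [sub_mulVec, dotProduct_sub, smul_mulVec, dotProduct_smul, quad_eval,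
      quad_eval, smul_eq_mul] at h0
    have hγq : 0 ≤ γ * (N11 + 2 * (N21 ⬝ᵥ z) + z ⬝ᵥ N22 *ᵥ z) := mul_nonneg hγ hzq
    simp only [zero_mulVec, dotProduct_zero] at h0
    nlinarith [h0, hγq, hβ]
end
end

section
/- Let N ∈ Π_{1,r}, a ∈ ℝ, λ ∈ ℝ^r with λ ≠ 0, and suppose there exists β > 0 such that the matrix [[−λᵀN₂₂⁻¹N₂₁ + a − β, (N|N₂₂)^(1/2) λᵀ],[(N|N₂₂)^(1/2) λ, (λᵀN₂₂⁻¹N₂₁ − a) N₂₂]] is positive semidefinite. Then λᵀN₂₂⁻¹N₂₁ − a < 0, the scalar γ := (λᵀN₂₂⁻¹λ)/(λᵀN₂₂⁻¹N₂₁ − a) satisfies γ ≥ 0, and the symmetric (1+r)×(1+r) matrix [[2a, λᵀ],[λ, 0]] − γN is positive definite. -/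
open Matrix

noncomputable section

section helpers

variable {r : ℕ}

lemma posDef_smul' {n : Type*} [Fintype n] {M : Matrix n n ℝ} (hM : M.PosDef) {c : ℝ}
    (hc : 0 < c) : (c • M).PosDef := by
  refine posDef_iff_dotProduct_mulVec.mpr ⟨?_, fun x hx => ?_⟩
  · unfold Matrix.IsHermitian
    rw [conjTranspose_smul, hM.1]
    simp
  · have := hM.dotProduct_mulVec_pos hx
    simp only [smul_mulVec, dotProduct_smul, smul_eq_mul]
    exact mul_pos hc this

lemma inv_smul'' {n : Type*} [Fintype n] [DecidableEq n] (A : Matrix n n ℝ) {c : ℝ} (hc : c ≠ 0)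
    (hA : IsUnit A.det) : (c • A)⁻¹ = c⁻¹ • A⁻¹ := by
  apply Matrix.inv_eq_left_inv
  rw [Matrix.smul_mul, Matrix.mul_smul, smul_smul, inv_mul_cancel₀ hc, one_smul,
    Matrix.nonsing_inv_mul A hA]

lemma row_mul_mul_col (v w : Fin r → ℝ) (D : Matrix (Fin r) (Fin r) ℝ) :
    ((Matrix.of fun (_ : Unit) j => v j) * D * (Matrix.of fun (_ : Unit) j => w j)ᴴ) () () =
      v ⬝ᵥ D *ᵥ w := by
  simp [Matrix.mul_apply, Matrix.mulVec, dotProduct, Finset.sum_mul, Finset.mul_sum]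
  rw [Finset.sum_comm]
  exact Finset.sum_congr rfl fun i _ => Finset.sum_congr rfl fun j _ => by ring

lemma unit_posSemidef {M : Matrix Unit Unit ℝ} (h : M.PosSemidef) : 0 ≤ M () () := by
  have := h.dotProduct_mulVec_nonneg (fun _ => 1)
  simpa [Matrix.mulVec, dotProduct] using this

lemma unit_posDef {M : Matrix Unit Unit ℝ} (h : 0 < M () ()) : M.PosDef := by
  refine posDef_iff_dotProduct_mulVec.mpr ⟨by ext ⟨⟩ ⟨⟩; simp [Matrix.conjTranspose_apply], fun x hx => ?_⟩
  have hx0 : x () ≠ 0 := by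
    intro h0; apply hx; funext u; cases u; exact h0
  have hxx : star x ⬝ᵥ M *ᵥ x = M () () * (x () * x ()) := by
    simp [Matrix.mulVec, dotProduct]; ring
  rw [hxx]
  exact mul_pos h (mul_self_pos.mpr hx0)

lemma psd_diag {n : Type*} [Fintype n] [DecidableEq n] {M : Matrix n n ℝ} (h : M.PosSemidef)
    (i : n) : 0 ≤ M i i := by
  have := h.dotProduct_mulVec_nonneg (Pi.single i 1)
  simpa [Matrix.mulVec, dotProduct, Pi.single_apply] using this

lemma posDef_fromBlocks₂₂ {m n : Type*} [Fintype m] [Fintype n] [DecidableEq n]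
    {A : Matrix m m ℝ} (B : Matrix m n ℝ) {D : Matrix n n ℝ} (hD : D.PosDef) [Invertible D]
    (hS : (A - B * D⁻¹ * Bᴴ).PosDef) : (fromBlocks A B Bᴴ D).PosDef := by
  refine posDef_iff_dotProduct_mulVec.mpr ⟨(Matrix.IsHermitian.fromBlocks₂₂ A B hD.1).mpr hS.1, fun x hx => ?_⟩
  rw [← Sum.elim_comp_inl_inr x, dotProduct_mulVec, schur_complement_eq₂₂ A B _ _ hD.1]
  by_cases h1 : x ∘ Sum.inl = 0
  · have h2 : x ∘ Sum.inr ≠ 0 := by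
      intro h2
      apply hx
      rw [← Sum.elim_comp_inl_inr x, h1, h2]
      ext (i | i) <;> simp
    have e1 : (D⁻¹ * Bᴴ) *ᵥ (x ∘ Sum.inl) + x ∘ Sum.inr = x ∘ Sum.inr := by
      rw [h1, mulVec_zero, zero_add]
    rw [e1, h1]
    have t1 := hD.dotProduct_mulVec_pos h2
    rw [dotProduct_mulVec] at t1
    simpa using t1
  · have t2 := hS.dotProduct_mulVec_pos h1
    rw [dotProduct_mulVec] at t2
    have t1 : 0 ≤ star ((D⁻¹ * Bᴴ) *ᵥ (x ∘ Sum.inl) + x ∘ Sum.inr) ᵥ*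
        D ⬝ᵥ ((D⁻¹ * Bᴴ) *ᵥ (x ∘ Sum.inl) + x ∘ Sum.inr) := by
      have := hD.posSemidef.dotProduct_mulVec_nonneg ((D⁻¹ * Bᴴ) *ᵥ (x ∘ Sum.inl) + x ∘ Sum.inr)
      rwa [dotProduct_mulVec] at this
    exact add_pos_of_nonneg_of_pos t1 t2

lemma bmat_eq (c : ℝ) (l : Fin r → ℝ) (M : Matrix (Fin r) (Fin r) ℝ) :
    bmat c l M = Matrix.fromBlocks (Matrix.of fun _ _ => c) (Matrix.of fun _ j => l j)
      (Matrix.of fun (_ : Unit) j => l j)ᴴ M := by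
  have h : (Matrix.of fun (i : Fin r) (_ : Unit) => l i) = (Matrix.of fun (_ : Unit) j => l j)ᴴ := by
    ext i ⟨⟩
    simp [Matrix.conjTranspose_apply]
  unfold bmat
  rw [h]

lemma dot_expand (M : Matrix (Fin r) (Fin r) ℝ) (u v : Fin r → ℝ) (c : ℝ) :
    (fun j => u j - c * v j) ⬝ᵥ M *ᵥ (fun j => u j - c * v j) =
      u ⬝ᵥ M *ᵥ u - c * (u ⬝ᵥ M *ᵥ v) - c * (v ⬝ᵥ M *ᵥ u) + c ^ 2 * (v ⬝ᵥ M *ᵥ v) := by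
  have h1 : (fun j => u j - c * v j) = u - c • v := by funext j; simp
  rw [h1]
  simp only [sub_dotProduct, dotProduct_sub, mulVec_sub, mulVec_smul, smul_dotProduct,
    dotProduct_smul, smul_eq_mul]
  ring

end helpers

lemma smul_dot {r : ℕ} (c : ℝ) (v w : Fin r → ℝ) (M : Matrix (Fin r) (Fin r) ℝ) :
    (c • v) ⬝ᵥ M *ᵥ (c • w) = (c * c) * (v ⬝ᵥ M *ᵥ w) := by
  simp only [smul_dotProduct, mulVec_smul, dotProduct_smul, smul_eq_mul]
  ring

/-- Let `N ∈ Π_{1,r}` (i.e. `N₂₂ < 0`, Schur complement `N|N₂₂ ≥ 0`),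
`a ∈ ℝ`, `λ ∈ ℝ^r` with `λ ≠ 0`, and suppose there exists `β > 0` such that
`[[-λᵀN₂₂⁻¹N₂₁ + a - β, (N|N₂₂)^(1/2) λᵀ], [(N|N₂₂)^(1/2) λ, (λᵀN₂₂⁻¹N₂₁ - a) N₂₂]]`
is positive semidefinite.  Then `λᵀN₂₂⁻¹N₂₁ - a < 0`, the scalar
`γ := (λᵀN₂₂⁻¹λ)/(λᵀN₂₂⁻¹N₂₁ - a)` satisfies `γ ≥ 0`, and the matrix
`[[2a, λᵀ], [λ, 0]] - γN` is positive definite, where `N = [[N₁₁, N₂₁ᵀ], [N₂₁, N₂₂]]`. -/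
theorem multiplier_posDef_of_posSemidef {r : ℕ} (N11 : ℝ) (N21 : Fin r → ℝ)
    (N22 : Matrix (Fin r) (Fin r) ℝ) (hN22 : (-N22).PosDef)
    (hschur : 0 ≤ N11 - N21 ⬝ᵥ N22⁻¹ *ᵥ N21) (a : ℝ) (l : Fin r → ℝ) (hl : l ≠ 0)
    (hβ : ∃ β : ℝ, 0 < β ∧
      (bmat (-(l ⬝ᵥ N22⁻¹ *ᵥ N21) + a - β)
        (Real.sqrt (N11 - N21 ⬝ᵥ N22⁻¹ *ᵥ N21) • l)
        ((l ⬝ᵥ N22⁻¹ *ᵥ N21 - a) • N22)).PosSemidef) :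
    l ⬝ᵥ N22⁻¹ *ᵥ N21 - a < 0 ∧
    0 ≤ (l ⬝ᵥ N22⁻¹ *ᵥ l) / (l ⬝ᵥ N22⁻¹ *ᵥ N21 - a) ∧
    (bmat (2 * a) l 0 -
      ((l ⬝ᵥ N22⁻¹ *ᵥ l) / (l ⬝ᵥ N22⁻¹ *ᵥ N21 - a)) • bmat N11 N21 N22).PosDef := by
  obtain ⟨β, hβpos, hPSD⟩ := hβ
  set s := l ⬝ᵥ N22⁻¹ *ᵥ N21 with hs
  set q := l ⬝ᵥ N22⁻¹ *ᵥ l with hq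
  set p := N21 ⬝ᵥ N22⁻¹ *ᵥ N21 with hp
  set e := N11 - p with he
  set g := q / (s - a) with hgdef
  clear_value g
  clear_value e
  clear_value p
  clear_value q
  clear_value s
  -- basic facts
  have hdetU : IsUnit N22.det := by
    have h1 : IsUnit N22 := by
      have := hN22.isUnit.neg
      rwa [neg_neg] at this
    exact (Matrix.isUnit_iff_isUnit_det _).mp h1
  have hN22herm : N22.IsHermitian := by
    have := hN22.1.neg
    rwa [neg_neg] at this
  have hherm : N22⁻¹.IsHermitian := hN22herm.inv
  have htr : N22⁻¹ᵀ = N22⁻¹ := by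
    have := hherm
    rwa [Matrix.IsHermitian, conjTranspose_eq_transpose_of_trivial] at this
  have hNinvPD : (-(N22⁻¹)).PosDef := by
    have h3 := hN22.inv
    have h4 : (-N22)⁻¹ = -(N22⁻¹) := by
      have h5 : (-N22) = (-1 : ℝ) • N22 := by rw [neg_one_smul]
      rw [h5, inv_smul'' N22 (by norm_num) hdetU]
      norm_num
    rwa [h4] at h3
  have hqneg : q < 0 := by
    have h8 := hNinvPD.dotProduct_mulVec_pos hl
    simp only [star_trivial, neg_mulVec, dotProduct_neg] at h8
    rw [← hq] at h8
    linarith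
  have hsym : N21 ⬝ᵥ N22⁻¹ *ᵥ l = s := by
    rw [hs, dotProduct_mulVec, ← mulVec_transpose, htr, dotProduct_comm]
  -- step 1 : s - a < 0
  have hd : s - a < 0 := by
    have h0 := psd_diag hPSD (Sum.inl ())
    simp only [bmat, Matrix.fromBlocks_apply₁₁, Matrix.of_apply] at h0
    linarith
  have hgpos : 0 < g := by
    rw [hgdef]
    exact div_pos_of_neg_of_neg hqneg hd
  have hgne : g ≠ 0 := ne_of_gt hgpos
  have hdne : s - a ≠ 0 := ne_of_lt hd
  have hg : g * (s - a) = q := by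
    rw [hgdef]
    field_simp
  have hsq : Real.sqrt e * Real.sqrt e = e := Real.mul_self_sqrt hschur
  -- step 2 : key inequality from the PSD hypothesis
  have hDpd : ((s - a) • N22).PosDef := by
    have h6 : (s - a) • N22 = (a - s) • (-N22) := by
      rw [smul_neg, ← neg_smul, neg_sub]
    rw [h6]
    exact posDef_smul' hN22 (by linarith)
  letI := hDpd.isUnit.invertible
  rw [bmat_eq] at hPSD
  have hSchur1 := (Matrix.PosDef.fromBlocks₂₂ _ _ hDpd).mp hPSD
  have hkey0 := unit_posSemidef hSchur1
  rw [Matrix.sub_apply, row_mul_mul_col, inv_smul'' N22 hdne hdetU, smul_dot, hsq] at hkey0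
  simp only [Matrix.of_apply, smul_mulVec, dotProduct_smul, smul_eq_mul] at hkey0
  rw [← hq, inv_mul_eq_div, ← hgdef] at hkey0
  -- hkey0 : 0 ≤ -s + a - β - e * g
  -- step 3 : the main positive-definiteness
  refine ⟨hd, le_of_lt hgpos, ?_⟩
  have hrw : bmat (2 * a) l 0 - g • bmat N11 N21 N22 =
      Matrix.fromBlocks (Matrix.of fun _ _ => 2 * a - g * N11)
        (Matrix.of fun _ j => l j - g * N21 j)
        (Matrix.of fun (_ : Unit) j => l j - g * N21 j)ᴴ
        ((-g) • N22) := by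
    ext (i | i) (j | j) <;>
      simp [bmat, Matrix.sub_apply, Matrix.smul_apply, smul_eq_mul,
        Matrix.conjTranspose_apply]
  rw [hrw]
  have hDpd2 : ((-g) • N22).PosDef := by
    have h7 : (-g) • N22 = g • (-N22) := by rw [smul_neg, neg_smul]
    rw [h7]
    exact posDef_smul' hN22 hgpos
  letI := hDpd2.isUnit.invertible
  apply posDef_fromBlocks₂₂ _ hDpd2
  apply unit_posDef
  rw [Matrix.sub_apply, row_mul_mul_col,
    inv_smul'' N22 (by simpa using hgne : -g ≠ 0) hdetU]
  simp only [Matrix.of_apply, smul_mulVec, dotProduct_smul, smul_eq_mul]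
  rw [dot_expand, hsym, ← hq, ← hp, ← hs]
  have hexp : (-g)⁻¹ * (q - g * s - g * s + g ^ 2 * p) = -((s - a) - 2 * s + g * p) := by
    rw [← hg, inv_neg]
    have h1 : g⁻¹ * g = 1 := inv_mul_cancel₀ hgne
    linear_combination (-((s - a) - 2 * s + g * p)) * h1
  rw [hexp]
  have : 2 * a - g * N11 - -((s - a) - 2 * s + g * p) = -(s - a) - g * e := by
    rw [he]; ring
  rw [this]
  linarith
end
end

section
/- (Alternative description of the set of systems compatible with the data and the prior knowledge.) Let (A, B) ∈ ℝ^(n×f) × ℝ^(n×g) be such that the entries of the parameter vector v = [vec(Aᵀ); vec(Bᵀ)] indexed by s equal the prescribed values v_s. Then (A, B) ∈ Σ if and only if [1; v_s̄]ᵀ N [1; v_s̄] ≥ 0, where v_s̄ is the subvector of v with entries indexed by s̄. -/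
open Matrix Kronecker

noncomputable section

/-- Index type for the stacked parameter vector `v = [vec(Aᵀ); vec(Bᵀ)] ∈ ℝ^(n(f+g))`:
`inl (i, a)` indexes the entry `A i a` and `inr (i, b)` the entry `B i b`. -/
abbrev ParamIdx (n f g : ℕ) := (Fin n × Fin f) ⊕ (Fin n × Fin g)

/-- The parameter vector `v = [vec(Aᵀ); vec(Bᵀ)]` of a system `(A, B)`. -/
def paramVec {n f g : ℕ} (A : Matrix (Fin n) (Fin f) ℝ) (B : Matrix (Fin n) (Fin g) ℝ) :
    ParamIdx n f g → ℝ :=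
  Sum.elim (fun p => A p.1 p.2) (fun p => B p.1 p.2)

/-- The data matrix `D = [Iₙ ⊗ 𝓕 ; Iₙ ⊗ 𝓗] ∈ ℝ^(n(f+g) × nT)`. -/
def Dmat {n f g T : ℕ} (F : Matrix (Fin f) (Fin T) ℝ) (H : Matrix (Fin g) (Fin T) ℝ) :
    Matrix (ParamIdx n f g) (Fin n × Fin T) ℝ :=
  Matrix.fromRows ((1 : Matrix (Fin n) (Fin n) ℝ) ⊗ₖ F)
    ((1 : Matrix (Fin n) (Fin n) ℝ) ⊗ₖ H)

/-- The set `Σ` of systems `(A, B)` compatible with the data `(Ẋ, 𝓕, 𝓗)`, the noise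
bound `‖vec(Wᵀ)‖² ≤ Φ₁₁`, and the prior knowledge that the entries of `v` indexed by
`s` equal `vs`. -/
def SigmaSet {n f g T : ℕ} (Xd : Matrix (Fin n) (Fin T) ℝ) (F : Matrix (Fin f) (Fin T) ℝ)
    (H : Matrix (Fin g) (Fin T) ℝ) (Φ11 : ℝ) (s : Finset (ParamIdx n f g))
    (vs : {i // i ∈ s} → ℝ) :
    Set (Matrix (Fin n) (Fin f) ℝ × Matrix (Fin n) (Fin g) ℝ) :=
  {AB | (∀ i : {i // i ∈ s}, paramVec AB.1 AB.2 i.1 = vs i) ∧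
    ∃ W : Matrix (Fin n) (Fin T) ℝ,
      (∑ i, ∑ t, W i t ^ 2) ≤ Φ11 ∧ Xd = AB.1 * F + AB.2 * H + W}

/-- The matrix `M = [[1, 0], [vec(Ẋᵀ) − D_{s•}ᵀ v_s, −D_{s̄•}ᵀ]]`. -/
def Mmat {n f g T : ℕ} (Xd : Matrix (Fin n) (Fin T) ℝ) (F : Matrix (Fin f) (Fin T) ℝ)
    (H : Matrix (Fin g) (Fin T) ℝ) (s : Finset (ParamIdx n f g))
    (vs : {i // i ∈ s} → ℝ) :
    Matrix (Unit ⊕ (Fin n × Fin T)) (Unit ⊕ {i // i ∈ sᶜ}) ℝ :=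
  Matrix.fromBlocks (Matrix.of fun _ _ => 1) 0
    (Matrix.of fun p _ =>
      Xd p.1 p.2 -
        (((Dmat F H).submatrix (fun i : {i // i ∈ s} => i.1) id)ᵀ *ᵥ vs) p)
    (-((Dmat F H).submatrix (fun i : {i // i ∈ sᶜ} => i.1) id)ᵀ)

/-- The matrix `diag(Φ₁₁, −I_{nT})`. -/
def PhiMat {n T : ℕ} (Φ11 : ℝ) :
    Matrix (Unit ⊕ (Fin n × Fin T)) (Unit ⊕ (Fin n × Fin T)) ℝ :=
  Matrix.fromBlocks (Matrix.of fun _ _ => Φ11) 0 0 (-1)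

/-- The data-based matrix `N = Mᵀ diag(Φ₁₁, −I_{nT}) M ∈ 𝕊^(1+ℓ)`. -/
def Nmat {n f g T : ℕ} (Xd : Matrix (Fin n) (Fin T) ℝ) (F : Matrix (Fin f) (Fin T) ℝ)
    (H : Matrix (Fin g) (Fin T) ℝ) (Φ11 : ℝ) (s : Finset (ParamIdx n f g))
    (vs : {i // i ∈ s} → ℝ) :
    Matrix (Unit ⊕ {i // i ∈ sᶜ}) (Unit ⊕ {i // i ∈ sᶜ}) ℝ :=
  (Mmat Xd F H s vs)ᵀ * PhiMat (n := n) (T := T) Φ11 * Mmat Xd F H s vs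

/-- **alternative description of `Σ`.** Let `(A, B)` be such that the
entries of `v = [vec(Aᵀ); vec(Bᵀ)]` indexed by `s` equal the prescribed values `vs`.
Then `(A, B) ∈ Σ` iff `[1; v_s̄]ᵀ N [1; v_s̄] ≥ 0`. -/
theorem mem_SigmaSet_iff_quadratic {n f g T : ℕ} (hn : 0 < n) (hf : 0 < f) (hg : 0 < g)
    (hT : 0 < T) (Xd : Matrix (Fin n) (Fin T) ℝ) (F : Matrix (Fin f) (Fin T) ℝ)
    (H : Matrix (Fin g) (Fin T) ℝ) (Φ11 : ℝ) (hΦ : 0 ≤ Φ11)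
    (s : Finset (ParamIdx n f g)) (vs : {i // i ∈ s} → ℝ)
    (A : Matrix (Fin n) (Fin f) ℝ) (B : Matrix (Fin n) (Fin g) ℝ)
    (hAB : ∀ i : {i // i ∈ s}, paramVec A B i.1 = vs i) :
    (A, B) ∈ SigmaSet Xd F H Φ11 s vs ↔
      0 ≤ (Sum.elim (fun _ : Unit => (1 : ℝ)) fun i : {i // i ∈ sᶜ} => paramVec A B i.1) ⬝ᵥ
        (Nmat Xd F H Φ11 s vs *ᵥ
          Sum.elim (fun _ : Unit => (1 : ℝ)) fun i : {i // i ∈ sᶜ} => paramVec A B i.1) := by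
  classical
  set v := paramVec A B with hv
  set x : Unit ⊕ {i // i ∈ sᶜ} → ℝ :=
    Sum.elim (fun _ : Unit => (1 : ℝ)) (fun i : {i // i ∈ sᶜ} => v i.1) with hx
  have hD : ∀ p : Fin n × Fin T,
      (∑ i : {i // i ∈ s}, Dmat F H i.1 p * v i.1) +
      (∑ i : {i // i ∈ sᶜ}, Dmat F H i.1 p * v i.1) =
      (A * F + B * H) p.1 p.2 := by
    intro p
    rw [Finset.sum_coe_sort s (fun i => Dmat F H i p * v i),
        Finset.sum_coe_sort sᶜ (fun i => Dmat F H i p * v i),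
        Finset.sum_add_sum_compl]
    rw [show (∑ i ∈ Finset.univ, Dmat F H i p * v i) = ∑ i, Dmat F H i p * v i from rfl,
        Fintype.sum_sum_type]
    simp only [Dmat, Matrix.fromRows_apply_inl, Matrix.fromRows_apply_inr,
      Matrix.kroneckerMap_apply, hv, paramVec, Sum.elim_inl, Sum.elim_inr]
    rw [Fintype.sum_prod_type, Fintype.sum_prod_type]
    simp only [Matrix.one_apply, ite_mul, one_mul, zero_mul, Finset.sum_ite_eq',
      Finset.mem_univ, if_true, Matrix.add_apply, Matrix.mul_apply]
    congr 1 <;>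
      (rw [Finset.sum_comm]
       simp only [Finset.sum_ite_eq', Finset.mem_univ, if_true]
       exact Finset.sum_congr rfl (fun a _ => by ring))
  have hz : Mmat Xd F H s vs *ᵥ x =
      Sum.elim (fun _ : Unit => (1 : ℝ))
        (fun p : Fin n × Fin T => Xd p.1 p.2 - (A * F + B * H) p.1 p.2) := by
    funext j
    rcases j with u | p
    · simp [Mmat, Matrix.mulVec, dotProduct, Fintype.sum_sum_type, hx]
    · have h2 : (∑ i : {i // i ∈ s}, Dmat F H i.1 p * vs i)
          = ∑ i : {i // i ∈ s}, Dmat F H i.1 p * v i.1 :=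
        Finset.sum_congr rfl (fun i _ => by rw [hAB i])
      simp only [Matrix.mulVec, dotProduct, Fintype.sum_sum_type, Mmat,
        Matrix.fromBlocks_apply₂₁, Matrix.fromBlocks_apply₂₂, Matrix.of_apply, hx,
        Sum.elim_inl, Sum.elim_inr, Matrix.neg_apply, Matrix.transpose_apply,
        Matrix.submatrix_apply, id_eq, mul_one, neg_mul,
        Finset.sum_neg_distrib, Finset.univ_unique, Finset.sum_const,
        Finset.card_singleton, one_smul]
      linarith [hD p, h2]
  have key : x ⬝ᵥ Nmat Xd F H Φ11 s vs *ᵥ x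
      = Φ11 - ∑ i, ∑ t, (Xd i t - (A * F + B * H) i t) ^ 2 := by
    rw [Nmat, ← Matrix.mulVec_mulVec, ← Matrix.mulVec_mulVec, hz,
        dotProduct_mulVec, Matrix.vecMul_transpose, hz]
    simp only [PhiMat, Matrix.mulVec, dotProduct, Fintype.sum_sum_type,
      Matrix.fromBlocks_apply₁₁, Matrix.fromBlocks_apply₁₂, Matrix.fromBlocks_apply₂₁,
      Matrix.fromBlocks_apply₂₂, Matrix.of_apply, Sum.elim_inl, Sum.elim_inr,
      Matrix.zero_apply, zero_mul, Finset.sum_const_zero, add_zero, zero_add,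
      Matrix.neg_apply, Matrix.one_apply, Finset.univ_unique, Finset.sum_const,
      Finset.card_singleton, one_smul, mul_one, one_mul]
    rw [Fintype.sum_prod_type]
    simp only [neg_mul, ite_mul, one_mul, zero_mul, neg_zero]
    rw [sub_eq_add_neg, ← Finset.sum_neg_distrib]
    congr 1
    refine Finset.sum_congr rfl (fun i _ => ?_)
    rw [← Finset.sum_neg_distrib]
    refine Finset.sum_congr rfl (fun t _ => ?_)
    simp only [Finset.sum_neg_distrib, Finset.sum_ite_eq, Finset.mem_univ, if_true]
    ring
  rw [key]
  constructor
  · rintro ⟨-, W, hW, hXd⟩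
    have hWE : ∀ i t, Xd i t - (A * F + B * H) i t = W i t := by
      intro i t; rw [hXd]; simp [Matrix.add_apply]
    have hs : (∑ i, ∑ t, (Xd i t - (A * F + B * H) i t) ^ 2) = ∑ i, ∑ t, W i t ^ 2 := by
      exact Finset.sum_congr rfl fun i _ => Finset.sum_congr rfl fun t _ => by rw [hWE]
    linarith
  · intro h
    refine ⟨hAB, Xd - (A * F + B * H), ?_, by abel⟩
    have hs : (∑ i, ∑ t, (Xd - (A * F + B * H)) i t ^ 2)
        = ∑ i, ∑ t, (Xd i t - (A * F + B * H) i t) ^ 2 := by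
      refine Finset.sum_congr rfl fun i _ => Finset.sum_congr rfl fun t _ => by
        simp [Matrix.sub_apply]
    linarith
end
end
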